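/- Under the dwell-time switched Lyapunov conditions (P_i ≥ I, A_i^T P_i + P_i A_i ≤ -λ P_i, P_i ≤ μ P_j, dwell time τ_d ≥ ln(μ)/((1-a*)λ) for some a* ∈ (0,1)), every solution of the switched linear system ẋ = A_{σ(t)} x converges to zero exponentially; in particular ‖x(t)‖² ≤ μ·λ̄(P_{σ(0)})·e^{-a* λ t}‖x(0)‖² for all t ≥ 0 up to a multiplicative constant depending only on μ, λ, a*. -/

import Mathlib

/-! While mode `i` is active, `V_i(x) = xᵀ P_i x` decays like `e^{-λt}` along the trajectory, and at
a switch it grows by at most the factor `μ`. Over a dwell interval of length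
`Δ ≥ ln μ / ((1 - a⋆) λ)` we have `μ e^{-λΔ} ≤ e^{-a⋆λΔ}`, so the values of `V` at the switching
times decay at rate `a⋆λ`, and inside an interval the decay at rate `λ` is faster still. Finally
`|x|² ≤ V_i(x)` because `P_i ≥ I`, and `V_{σ(0)}(x(0)) ≤ λ̄(P_{σ(0)}) |x(0)|²`.
If `μ = 1` the dwell time may vanish and the switching times may accumulate, but then all `P_i`
coincide and `V` is a common Lyapunov function for every mode. -/

open Matrix Set Real
open scoped MatrixOrder

section Calculus

variable {𝕜 : Type*} [NontriviallyNormedField 𝕜] {l m : Type*} [Fintype m] {S : Set 𝕜} {s : 𝕜}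

theorem HasDerivWithinAt.dotProduct {u v : 𝕜 → m → 𝕜} {u' v' : m → 𝕜}
    (hu : HasDerivWithinAt u u' S s) (hv : HasDerivWithinAt v v' S s) :
    HasDerivWithinAt (fun r => u r ⬝ᵥ v r) (u' ⬝ᵥ v s + u s ⬝ᵥ v') S s :=
  (HasDerivWithinAt.fun_sum (u := .univ) fun i _ =>
    (hasDerivWithinAt_pi.1 hu i).fun_mul (hasDerivWithinAt_pi.1 hv i)).congr_deriv
      Finset.sum_add_distrib

theorem HasDerivWithinAt.matrix_mulVec (Q : Matrix l m 𝕜) {x : 𝕜 → m → 𝕜} {x' : m → 𝕜}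
    (hx : HasDerivWithinAt x x' S s) : HasDerivWithinAt (fun r => Q *ᵥ x r) (Q *ᵥ x') S s :=
  hasDerivWithinAt_pi.2 fun i =>
    HasDerivWithinAt.fun_sum fun j _ => (hasDerivWithinAt_pi.1 hx j).const_mul (Q i j)

end Calculus

theorem le_mul_exp_of_hasDerivWithinAt_le {V V' : ℝ → ℝ} {c a b : ℝ}
    (hV : ContinuousOn V (Icc a b)) (hV' : ∀ s ∈ Ico a b, HasDerivWithinAt V (V' s) (Ici s) s)
    (hle : ∀ s ∈ Ico a b, V' s ≤ c * V s) :
    ∀ s ∈ Icc a b, V s ≤ V a * exp (c * (s - a)) := by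
  simpa only [gronwallBound_ε0] using le_gronwallBound_of_liminf_deriv_right_le hV
    (fun s hs r hr => (hV' s hs).liminf_right_slope_le hr) le_rfl
    fun s hs => (hle s hs).trans_eq (add_zero _).symm

theorem mul_exp_neg_le_exp_of_log_div_le {mu lam a Δ : ℝ} (hmu : 0 < mu) (hlam : 0 < lam)
    (ha : a < 1) (hΔ : log mu / ((1 - a) * lam) ≤ Δ) :
    mu * exp (-lam * Δ) ≤ exp (-(a * lam) * Δ) := by
  have hlog : log mu ≤ (1 - a) * lam * Δ :=
    (div_le_iff₀' (mul_pos (sub_pos.2 ha) hlam)).1 hΔ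
  calc mu * exp (-lam * Δ) = exp (log mu + -lam * Δ) := by rw [exp_add, exp_log hmu]
    _ ≤ exp (-(a * lam) * Δ) := exp_le_exp.2 (by linarith)

theorem exp_neg_mul_le_exp_neg_mul_mul {lam a d : ℝ} (hlam : 0 ≤ lam) (ha : a ≤ 1)
    (hd : 0 ≤ d) : exp (-lam * d) ≤ exp (-(a * lam) * d) :=
  exp_le_exp.2 (by nlinarith [mul_nonneg (mul_nonneg (sub_nonneg.2 ha) hlam) hd])

theorem exists_mem_Ico_of_exists_lt {α : Type*} [LinearOrder α] {t : ℕ → α} {s : α}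
    (h0 : t 0 ≤ s) (h : ∃ k, s < t k) : ∃ k, s ∈ Ico (t k) (t (k + 1)) := by
  by_contra! hno
  obtain ⟨k, hk⟩ := h
  have hle : ∀ k, t k ≤ s := fun k => Nat.rec h0 (fun k ih => le_of_not_gt fun h => hno k ⟨ih, h⟩) k
  exact (hle k).not_gt hk

theorem exists_lt_of_le_sub {t : ℕ → ℝ} {δ : ℝ} (hδ : 0 < δ) (h : ∀ k, δ ≤ t (k + 1) - t k)
    (s : ℝ) : ∃ k, s < t k := by
  have hlin : ∀ k : ℕ, t 0 + k * δ ≤ t k := by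
    intro k
    induction k with
    | zero => simp
    | succ k ih => push_cast; linarith [h k]
  obtain ⟨k, hk⟩ := exists_nat_gt ((s - t 0) / δ)
  exact ⟨k, by linarith [hlin k, (div_lt_iff₀ hδ).1 hk]⟩

namespace Matrix

variable {m : Type*} [Fintype m]

theorem PosSemidef.dotProduct_mulVec_self_nonneg {M : Matrix m m ℝ} (hM : M.PosSemidef)
    (v : m → ℝ) : 0 ≤ v ⬝ᵥ M *ᵥ v := by
  simpa using hM.dotProduct_mulVec_nonneg v

theorem dotProduct_mulVec_le_of_le {M N : Matrix m m ℝ} (h : M ≤ N) (v : m → ℝ) :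
    v ⬝ᵥ M *ᵥ v ≤ v ⬝ᵥ N *ᵥ v := by
  simpa [sub_mulVec] using (le_iff.1 h).dotProduct_mulVec_self_nonneg v

theorem IsHermitian.dotProduct_mulVec_le_iSup_eigenvalues [DecidableEq m] {M : Matrix m m ℝ}
    (hM : M.IsHermitian) (v : m → ℝ) :
    v ⬝ᵥ M *ᵥ v ≤ (⨆ j, hM.eigenvalues j) * (v ⬝ᵥ v) := by
  have hle : M ≤ algebraMap ℝ _ (⨆ j, hM.eigenvalues j) :=
    le_algebraMap_of_spectrum_le (ha := hM) fun r hr => by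
      obtain ⟨j, rfl⟩ := hM.spectrum_real_eq_range_eigenvalues ▸ hr
      exact le_ciSup (Set.finite_range _).bddAbove j
  simpa [Algebra.algebraMap_eq_smul_one, smul_mulVec] using dotProduct_mulVec_le_of_le hle v

theorem dotProduct_mulVec_derivative_le_of_lyapunov {A P : Matrix m m ℝ} {lam : ℝ}
    (h : Aᵀ * P + P * A ≤ -(lam • P)) (v : m → ℝ) :
    (A *ᵥ v) ⬝ᵥ P *ᵥ v + v ⬝ᵥ P *ᵥ (A *ᵥ v) ≤ -lam * (v ⬝ᵥ P *ᵥ v) := by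
  have := dotProduct_mulVec_le_of_le h v
  rwa [add_mulVec, dotProduct_add, ← mulVec_mulVec, dotProduct_mulVec, vecMul_transpose,
    ← mulVec_mulVec, neg_mulVec, smul_mulVec, dotProduct_neg, dotProduct_smul, smul_eq_mul,
    ← neg_mul] at this

theorem dotProduct_mulVec_le_mul_exp_of_lyapunov {P : Matrix m m ℝ} {A : ℝ → Matrix m m ℝ}
    {x : ℝ → m → ℝ} {lam a b : ℝ} (hxc : ContinuousOn x (Icc a b))
    (hx : ∀ s ∈ Ico a b, HasDerivWithinAt x (A s *ᵥ x s) (Ici s) s)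
    (hLyap : ∀ s ∈ Ico a b, (A s)ᵀ * P + P * A s ≤ -(lam • P)) :
    ∀ s ∈ Icc a b, x s ⬝ᵥ P *ᵥ x s ≤ x a ⬝ᵥ P *ᵥ x a * exp (-lam * (s - a)) :=
  le_mul_exp_of_hasDerivWithinAt_le
    ((continuous_id.dotProduct (continuous_const.matrix_mulVec continuous_id)).comp_continuousOn
      hxc)
    (fun s hs => (hx s hs).dotProduct ((hx s hs).matrix_mulVec P))
    fun s hs => dotProduct_mulVec_derivative_le_of_lyapunov (hLyap s hs) (x s)

end Matrix

section SwitchedSystem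

variable {m I : Type*} [Fintype m] {A P : I → Matrix m m ℝ} {lam mu : ℝ} {σ : ℝ → I}
  {t : ℕ → ℝ} {x : ℝ → m → ℝ}

theorem dotProduct_mulVec_le_of_common_lyapunov {Q : Matrix m m ℝ}
    (hLyap : ∀ i, (A i)ᵀ * Q + Q * A i ≤ -(lam • Q)) (hx : ∀ s, HasDerivAt x (A (σ s) *ᵥ x s) s)
    {a s : ℝ} (hs : a ≤ s) : x s ⬝ᵥ Q *ᵥ x s ≤ x a ⬝ᵥ Q *ᵥ x a * exp (-lam * (s - a)) :=
  dotProduct_mulVec_le_mul_exp_of_lyapunov (A := fun r => A (σ r))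
    (fun r _ => (hx r).continuousAt.continuousWithinAt) (fun r _ => (hx r).hasDerivWithinAt)
    (fun r _ => hLyap (σ r)) s ⟨hs, le_rfl⟩

theorem dotProduct_mulVec_le_on_switchingInterval
    (hLyap : ∀ i, (A i)ᵀ * P i + P i * A i ≤ -(lam • P i))
    (hσ : ∀ k, ∀ s ∈ Ico (t k) (t (k + 1)), σ s = σ (t k))
    (hx : ∀ s, HasDerivAt x (A (σ s) *ᵥ x s) s) (k : ℕ) :
    ∀ s ∈ Icc (t k) (t (k + 1)),
      x s ⬝ᵥ P (σ (t k)) *ᵥ x s ≤ x (t k) ⬝ᵥ P (σ (t k)) *ᵥ x (t k) * exp (-lam * (s - t k)) :=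
  dotProduct_mulVec_le_mul_exp_of_lyapunov (A := fun s => A (σ s))
    (fun s _ => (hx s).continuousAt.continuousWithinAt) (fun s _ => (hx s).hasDerivWithinAt)
    fun s hs => hσ k s hs ▸ hLyap (σ (t k))

theorem dotProduct_mulVec_switchingTime_le (hmu : 0 ≤ mu) (hP : ∀ i, (P i).PosSemidef)
    (hLyap : ∀ i, (A i)ᵀ * P i + P i * A i ≤ -(lam • P i)) (hPmu : ∀ i j, P i ≤ mu • P j)
    (ht : Monotone t) {r : ℝ}
    (hdwell : ∀ k, mu * exp (-lam * (t (k + 1) - t k)) ≤ exp (-r * (t (k + 1) - t k)))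
    (hσ : ∀ k, ∀ s ∈ Ico (t k) (t (k + 1)), σ s = σ (t k))
    (hx : ∀ s, HasDerivAt x (A (σ s) *ᵥ x s) s) (k : ℕ) :
    x (t k) ⬝ᵥ P (σ (t k)) *ᵥ x (t k) ≤
      x (t 0) ⬝ᵥ P (σ (t 0)) *ᵥ x (t 0) * exp (-r * (t k - t 0)) := by
  induction k with
  | zero => simp
  | succ k ih =>
    set V := x (t k) ⬝ᵥ P (σ (t k)) *ᵥ x (t k)
    have hV : 0 ≤ V := (hP _).dotProduct_mulVec_self_nonneg _
    calc x (t (k + 1)) ⬝ᵥ P (σ (t (k + 1))) *ᵥ x (t (k + 1))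
        ≤ mu * (x (t (k + 1)) ⬝ᵥ P (σ (t k)) *ᵥ x (t (k + 1))) := by
          simpa [smul_mulVec] using dotProduct_mulVec_le_of_le (hPmu _ (σ (t k))) _
      _ ≤ mu * (V * exp (-lam * (t (k + 1) - t k))) := by
          gcongr
          exact dotProduct_mulVec_le_on_switchingInterval hLyap hσ hx k _
            ⟨ht k.le_succ, le_rfl⟩
      _ = mu * exp (-lam * (t (k + 1) - t k)) * V := by ring
      _ ≤ exp (-r * (t (k + 1) - t k)) * V := by gcongr; exact hdwell k
      _ ≤ exp (-r * (t (k + 1) - t k)) *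
            (x (t 0) ⬝ᵥ P (σ (t 0)) *ᵥ x (t 0) * exp (-r * (t k - t 0))) := by gcongr
      _ = x (t 0) ⬝ᵥ P (σ (t 0)) *ᵥ x (t 0) * exp (-r * (t (k + 1) - t 0)) := by
          rw [mul_left_comm, ← exp_add]; ring_nf

theorem exists_dotProduct_mulVec_le_of_one_lt {astar : ℝ} (hlam : 0 < lam) (hmu : 1 < mu)
    (hastar : astar < 1) (hP : ∀ i, (P i).PosSemidef)
    (hLyap : ∀ i, (A i)ᵀ * P i + P i * A i ≤ -(lam • P i)) (hPmu : ∀ i j, P i ≤ mu • P j)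
    (ht : Monotone t) (hdwell : ∀ k, log mu / ((1 - astar) * lam) ≤ t (k + 1) - t k)
    (hσ : ∀ k, ∀ s ∈ Ico (t k) (t (k + 1)), σ s = σ (t k))
    (hx : ∀ s, HasDerivAt x (A (σ s) *ᵥ x s) s) {s : ℝ} (hs : t 0 ≤ s) :
    ∃ i, x s ⬝ᵥ P i *ᵥ x s ≤
      x (t 0) ⬝ᵥ P (σ (t 0)) *ᵥ x (t 0) * exp (-(astar * lam) * (s - t 0)) := by
  have hδ : 0 < log mu / ((1 - astar) * lam) :=
    div_pos (log_pos hmu) (mul_pos (sub_pos.2 hastar) hlam)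
  obtain ⟨k, hk⟩ := exists_mem_Ico_of_exists_lt hs (exists_lt_of_le_sub hδ hdwell s)
  have hswitch := dotProduct_mulVec_switchingTime_le (by linarith) hP hLyap hPmu ht
    (fun k => mul_exp_neg_le_exp_of_log_div_le (by linarith) hlam hastar (hdwell k)) hσ hx k
  have hV : 0 ≤ x (t k) ⬝ᵥ P (σ (t k)) *ᵥ x (t k) := (hP _).dotProduct_mulVec_self_nonneg _
  refine ⟨σ (t k), ?_⟩
  calc x s ⬝ᵥ P (σ (t k)) *ᵥ x s
      ≤ x (t k) ⬝ᵥ P (σ (t k)) *ᵥ x (t k) * exp (-lam * (s - t k)) :=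
        dotProduct_mulVec_le_on_switchingInterval hLyap hσ hx k s (Ico_subset_Icc_self hk)
    _ ≤ x (t k) ⬝ᵥ P (σ (t k)) *ᵥ x (t k) * exp (-(astar * lam) * (s - t k)) :=
        mul_le_mul_of_nonneg_left
          (exp_neg_mul_le_exp_neg_mul_mul hlam.le hastar.le (sub_nonneg.2 hk.1)) hV
    _ ≤ x (t 0) ⬝ᵥ P (σ (t 0)) *ᵥ x (t 0) * exp (-(astar * lam) * (t k - t 0)) *
          exp (-(astar * lam) * (s - t k)) := by gcongr
    _ = x (t 0) ⬝ᵥ P (σ (t 0)) *ᵥ x (t 0) * exp (-(astar * lam) * (s - t 0)) := by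
        rw [mul_assoc, ← exp_add]; ring_nf

theorem exists_dotProduct_mulVec_le_of_dwellTime {astar : ℝ} (hlam : 0 < lam) (hmu : 1 ≤ mu)
    (hastar : astar < 1) (hP : ∀ i, (P i).PosSemidef)
    (hLyap : ∀ i, (A i)ᵀ * P i + P i * A i ≤ -(lam • P i)) (hPmu : ∀ i j, P i ≤ mu • P j)
    (ht : Monotone t) (hdwell : ∀ k, log mu / ((1 - astar) * lam) ≤ t (k + 1) - t k)
    (hσ : ∀ k, ∀ s ∈ Ico (t k) (t (k + 1)), σ s = σ (t k))
    (hx : ∀ s, HasDerivAt x (A (σ s) *ᵥ x s) s) {s : ℝ} (hs : t 0 ≤ s) :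
    ∃ i, x s ⬝ᵥ P i *ᵥ x s ≤
      x (t 0) ⬝ᵥ P (σ (t 0)) *ᵥ x (t 0) * exp (-(astar * lam) * (s - t 0)) := by
  rcases hmu.eq_or_lt with rfl | hmu
  · have hPconst : ∀ i, P i = P (σ (t 0)) := fun i =>
      le_antisymm (by simpa using hPmu i _) (by simpa using hPmu _ i)
    refine ⟨σ (t 0), (dotProduct_mulVec_le_of_common_lyapunov
      (fun i => hPconst i ▸ hLyap i) hx hs).trans ?_⟩
    exact mul_le_mul_of_nonneg_left
      (exp_neg_mul_le_exp_neg_mul_mul hlam.le hastar.le (sub_nonneg.2 hs))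
      ((hP _).dotProduct_mulVec_self_nonneg _)
  · exact exists_dotProduct_mulVec_le_of_one_lt hlam hmu hastar hP hLyap hPmu ht hdwell hσ hx hs

end SwitchedSystem

/-- Exponential stability of a switched linear system under dwell-time switched Lyapunov
conditions: `‖x(t)‖² ≤ C · μ · λ̄(P_{σ(0)}) · e^{-a⋆ λ t} ‖x(0)‖²` for a constant `C`
depending only on `μ, λ, a⋆` (here `‖v‖² = v ⬝ᵥ v` is the squared Euclidean norm and
`λ̄` the largest eigenvalue). -/
theorem switched_system_exponential_stability {n : ℕ} {I : Type*}
    (A P : I → Matrix (Fin n) (Fin n) ℝ) (lam mu astar : ℝ)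
    (hlam : 0 < lam) (hmu : 1 ≤ mu) (hastar : astar ∈ Set.Ioo (0 : ℝ) 1)
    (hPherm : ∀ i, (P i).IsHermitian)
    (hPgeI : ∀ i, (P i - 1).PosSemidef)
    (hLyap : ∀ i, ((-(lam • P i)) - ((A i)ᵀ * P i + P i * A i)).PosSemidef)
    (hPmu : ∀ i j, (mu • P j - P i).PosSemidef)
    (σ : ℝ → I) (t : ℕ → ℝ) (ht0 : t 0 = 0) (htmono : StrictMono t)
    (hdwell : ∀ k, Real.log mu / ((1 - astar) * lam) ≤ t (k + 1) - t k)
    (hσconst : ∀ k, ∀ s ∈ Set.Ico (t k) (t (k + 1)), σ s = σ (t k))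
    (x : ℝ → (Fin n → ℝ)) (hx : ∀ s, HasDerivAt x ((A (σ s)).mulVec (x s)) s) :
    ∃ C > (0 : ℝ), ∀ s ≥ (0 : ℝ),
      x s ⬝ᵥ x s ≤
        C * mu * (⨆ j, (hPherm (σ 0)).eigenvalues j) *
          Real.exp (-(astar * lam) * s) * (x 0 ⬝ᵥ x 0) := by
  have hP : ∀ i, (P i).PosSemidef := fun i => by simpa using (hPgeI i).add PosSemidef.one
  set lmax := ⨆ j, (hPherm (σ 0)).eigenvalues j
  refine ⟨1, one_pos, fun s hs => ?_⟩
  obtain ⟨i, hi⟩ := exists_dotProduct_mulVec_le_of_dwellTime hlam hmu hastar.2 hP hLyap hPmu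
    htmono.monotone hdwell hσconst hx (ht0 ▸ hs)
  rw [ht0, sub_zero] at hi
  calc x s ⬝ᵥ x s ≤ x s ⬝ᵥ P i *ᵥ x s := by simpa using dotProduct_mulVec_le_of_le (hPgeI i) _
    _ ≤ x 0 ⬝ᵥ P (σ 0) *ᵥ x 0 * exp (-(astar * lam) * s) := hi
    _ ≤ mu * (x 0 ⬝ᵥ P (σ 0) *ᵥ x 0 * exp (-(astar * lam) * s)) :=
        le_mul_of_one_le_left
          (mul_nonneg ((hP _).dotProduct_mulVec_self_nonneg _) (exp_pos _).le) hmu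
    _ ≤ mu * (lmax * (x 0 ⬝ᵥ x 0) * exp (-(astar * lam) * s)) := by
        gcongr
        exact (hPherm (σ 0)).dotProduct_mulVec_le_iSup_eigenvalues (x 0)
    _ = 1 * mu * lmax * exp (-(astar * lam) * s) * (x 0 ⬝ᵥ x 0) := by ring
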